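/- Corollary (single Gaussian case): If P₀ is a nondegenerate p-variate normal distribution with mean μ₀ and covariance Σ₀ (|Σ₀| ≠ 0), then for the untrimmed case α = 0 the population classification likelihood does not increase with k: 𝓛ᴨ_{0,1}(P₀) = 𝓛ᴨ_{0,k}(P₀) for every k ∈ ℕ. Equivalently, for any k, any Gaussian parameters θ = {θ_j}_{j=1}^k and weights π summing to 1, E_{P₀}[log φ(X; μ₀, Σ₀)] ≥ E_{P₀}[Σ_{j=1}^k 1_{Z_j(θ,π)}(X) log(π_j φ(X;θ_j))]. -/

import Mathlib

open MeasureTheory Matrix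

/-- The `p`-variate Gaussian density with mean `m` and covariance matrix `S`. -/
noncomputable def gpdf {p : ℕ} (m : Fin p → ℝ) (S : Matrix (Fin p) (Fin p) ℝ)
    (x : Fin p → ℝ) : ℝ :=
  (2 * Real.pi) ^ (-(p : ℝ) / 2) * S.det ^ (-(1 : ℝ) / 2) *
    Real.exp (-(1 / 2) * ((x - m) ⬝ᵥ (S⁻¹ *ᵥ (x - m))))

/-- The weighted maximum-likelihood assignment region `Z_j(θ,π)`, with ties assigned to the
smallest index, so that the `Z_j` partition `ℝᵖ`. -/
noncomputable def Zpart {p k : ℕ} (w : Fin k → ℝ) (m : Fin k → Fin p → ℝ)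
    (S : Fin k → Matrix (Fin p) (Fin p) ℝ) (j : Fin k) : Set (Fin p → ℝ) :=
  {x | (∀ r, w r * gpdf (m r) (S r) x ≤ w j * gpdf (m j) (S j) x) ∧
    ∀ r < j, ¬ ∀ s, w s * gpdf (m s) (S s) x ≤ w r * gpdf (m r) (S r) x}

/-- The denominator `∑ⱼ πⱼ ∫_{Z_j(θ,π)} φ(x;θⱼ) dx` of the normalizing constant. -/
noncomputable def etaDen {p k : ℕ} (w : Fin k → ℝ) (m : Fin k → Fin p → ℝ)
    (S : Fin k → Matrix (Fin p) (Fin p) ℝ) : ℝ :=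
  ∑ j, w j * ∫ x in Zpart w m S j, gpdf (m j) (S j) x

/-- The normalizing constant `η(θ,π)`. -/
noncomputable def eta {p k : ℕ} (w : Fin k → ℝ) (m : Fin k → Fin p → ℝ)
    (S : Fin k → Matrix (Fin p) (Fin p) ℝ) : ℝ :=
  1 / etaDen w m S

/-- The truncated-Gaussian clustering density
`f₀(x) = η(θ,π) ∑ⱼ 1_{Z_j(θ,π)}(x) πⱼ φ(x;θⱼ)`. -/
noncomputable def clusterDensity {p k : ℕ} (w : Fin k → ℝ) (m : Fin k → Fin p → ℝ)
    (S : Fin k → Matrix (Fin p) (Fin p) ℝ) (x : Fin p → ℝ) : ℝ :=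
  eta w m S * ∑ j, Set.indicator (Zpart w m S j) (fun y => w j * gpdf (m j) (S j) y) x

/-!
On `Zⱼ` the weighted maximum `g = maxⱼ πⱼ φ(·;θⱼ)` equals `πⱼ φ(·;θⱼ)`, and the `Zⱼ` partition
`ℝᵖ`, so the right-hand side is the cross entropy `∫ φ₀ log g`. Since
`∫ g = ∑ⱼ πⱼ ∫_{Zⱼ} φ(·;θⱼ) ≤ ∑ⱼ πⱼ = 1 = ∫ φ₀`, Gibbs' inequality, i.e. `log t ≤ t - 1` applied
to `t = g / φ₀` and integrated against `φ₀`, gives `∫ φ₀ log g ≤ ∫ φ₀ log φ₀`. All integrals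
exist because `|log g|` and `|log φ₀|` grow at most like the Mahalanobis form of `φ₀`, and
`q e^{-q/2} ≤ 4 e^{-q/4}`.
-/

open Real
open scoped MatrixOrder

section QuadraticForm
variable {ι : Type*} [Fintype ι]

lemma abs_dotProduct_mulVec_self_le (M : Matrix ι ι ℝ) (v : ι → ℝ) :
    |v ⬝ᵥ M *ᵥ v| ≤ (∑ i, ∑ j, |M i j|) * (v ⬝ᵥ v) := by
  have hcoord : ∀ i, v i * v i ≤ v ⬝ᵥ v := fun i =>
    Finset.single_le_sum (f := fun i => v i * v i) (fun j _ => mul_self_nonneg (v j))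
      (Finset.mem_univ i)
  have hexp : v ⬝ᵥ M *ᵥ v = ∑ i, ∑ j, M i j * (v i * v j) := by
    simp only [dotProduct, mulVec, Finset.mul_sum]
    exact Finset.sum_congr rfl fun i _ => Finset.sum_congr rfl fun j _ => by ring
  rw [hexp, Finset.sum_mul]
  refine (Finset.abs_sum_le_sum_abs _ _).trans (Finset.sum_le_sum fun i _ => ?_)
  rw [Finset.sum_mul]
  refine (Finset.abs_sum_le_sum_abs _ _).trans (Finset.sum_le_sum fun j _ => ?_)
  rw [abs_mul, abs_mul]
  gcongr
  nlinarith [hcoord i, hcoord j, abs_mul_abs_self (v i), abs_mul_abs_self (v j),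
    sq_nonneg (|v i| - |v j|)]

lemma add_dotProduct_add_self_le (u d : ι → ℝ) :
    (u + d) ⬝ᵥ (u + d) ≤ 2 * (u ⬝ᵥ u + d ⬝ᵥ d) := by
  simp only [dotProduct, Pi.add_apply, Finset.mul_sum, ← Finset.sum_add_distrib]
  exact Finset.sum_le_sum fun i _ => by nlinarith [sq_nonneg (u i - d i)]

lemma mulVec_dotProduct_mulVec_self (N : Matrix ι ι ℝ) (u : ι → ℝ) :
    (N *ᵥ u) ⬝ᵥ (N *ᵥ u) = u ⬝ᵥ (Nᵀ * N) *ᵥ u := by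
  rw [← mulVec_mulVec, dotProduct_mulVec u, vecMul_transpose]

variable [DecidableEq ι] {A : Matrix ι ι ℝ}

lemma Matrix.transpose_cfcSqrt (A : Matrix ι ι ℝ) : (CFC.sqrt A)ᵀ = CFC.sqrt A := by
  simpa [Matrix.IsHermitian] using (CFC.sqrt_nonneg A).posSemidef.isHermitian

lemma Matrix.PosSemidef.dotProduct_mulVec_eq_sqrt (hA : A.PosSemidef) (v : ι → ℝ) :
    v ⬝ᵥ A *ᵥ v = (CFC.sqrt A *ᵥ v) ⬝ᵥ (CFC.sqrt A *ᵥ v) := by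
  rw [mulVec_dotProduct_mulVec_self, transpose_cfcSqrt, CFC.sqrt_mul_sqrt_self A hA.nonneg]

lemma Matrix.PosDef.det_sqrt_ne_zero (hA : A.PosDef) : (CFC.sqrt A).det ≠ 0 := by
  rw [hA.posSemidef.det_sqrt]
  simpa using Real.sqrt_ne_zero'.2 hA.det_pos

lemma Matrix.PosDef.exists_dotProduct_self_le (hA : A.PosDef) :
    ∃ c, 0 ≤ c ∧ ∀ v, v ⬝ᵥ v ≤ c * (v ⬝ᵥ A *ᵥ v) := by
  set B := CFC.sqrt A
  have hB : IsUnit B.det := isUnit_iff_ne_zero.2 hA.det_sqrt_ne_zero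
  refine ⟨∑ i, ∑ j, |(B⁻¹ᵀ * B⁻¹) i j|, by positivity, fun v => ?_⟩
  have hv : v = B⁻¹ *ᵥ (B *ᵥ v) := by rw [mulVec_mulVec, nonsing_inv_mul B hB, one_mulVec]
  calc v ⬝ᵥ v = (B *ᵥ v) ⬝ᵥ (B⁻¹ᵀ * B⁻¹) *ᵥ (B *ᵥ v) := by
        conv_lhs => rw [hv]
        rw [mulVec_dotProduct_mulVec_self]
    _ ≤ _ := le_of_abs_le (abs_dotProduct_mulVec_self_le _ _)
    _ = _ := by rw [hA.posSemidef.dotProduct_mulVec_eq_sqrt]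

end QuadraticForm

section ChangeOfVariables
variable {ι : Type*} [Fintype ι] [DecidableEq ι] {M : Matrix ι ι ℝ}

lemma measurableEmbedding_mulVec (hM : M.det ≠ 0) : MeasurableEmbedding (toLin' M) :=
  (LinearMap.isClosedEmbedding_of_injective (LinearMap.ker_eq_bot.2
    (mulVec_injective_iff_isUnit.2 ((isUnit_iff_isUnit_det M).2 (isUnit_iff_ne_zero.2 hM)))))
    |>.measurableEmbedding

lemma integral_comp_mulVec (hM : M.det ≠ 0) (f : (ι → ℝ) → ℝ) :
    ∫ x, f (M *ᵥ x) = |M.det|⁻¹ * ∫ y, f y := by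
  rw [← abs_inv, ← ENNReal.toReal_ofReal (abs_nonneg _), ← smul_eq_mul, ← integral_smul_measure,
    ← map_matrix_volume_pi_eq_smul_volume_pi hM, (measurableEmbedding_mulVec hM).integral_map]
  rfl

lemma integrable_comp_mulVec_iff (hM : M.det ≠ 0) {f : (ι → ℝ) → ℝ} :
    Integrable (fun x => f (M *ᵥ x)) ↔ Integrable f := by
  change Integrable (f ∘ toLin' M) _ ↔ _
  rw [← (measurableEmbedding_mulVec hM).integrable_map_iff,
    map_matrix_volume_pi_eq_smul_volume_pi hM,
    integrable_smul_measure (by simpa using hM) ENNReal.ofReal_ne_top]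

end ChangeOfVariables

section GaussianIntegral
variable {ι : Type*} [Fintype ι]

lemma exp_neg_half_dotProduct_self_eq_prod (y : ι → ℝ) :
    rexp (-(1/2) * (y ⬝ᵥ y)) = ∏ i, rexp (-(1/2) * y i ^ 2) := by
  rw [← Real.exp_sum, dotProduct, Finset.mul_sum]
  simp only [sq]

lemma integrable_exp_neg_half_dotProduct_self :
    Integrable (fun y : ι → ℝ => rexp (-(1/2) * (y ⬝ᵥ y))) := by
  simp_rw [exp_neg_half_dotProduct_self_eq_prod]
  exact Integrable.fintype_prod (f := fun _ t => rexp (-(1/2) * t ^ 2))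
    fun _ => integrable_exp_neg_mul_sq (by norm_num)

lemma integral_exp_neg_half_dotProduct_self :
    ∫ y : ι → ℝ, rexp (-(1/2) * (y ⬝ᵥ y)) = (2 * π) ^ (Fintype.card ι / 2 : ℝ) := by
  simp_rw [exp_neg_half_dotProduct_self_eq_prod]
  rw [integral_fintype_prod_volume_eq_pow (fun t => rexp (-(1/2) * t ^ 2)), integral_gaussian,
    Real.sqrt_eq_rpow, ← Real.rpow_natCast, ← Real.rpow_mul (by positivity)]
  congr 1 <;> ring

end GaussianIntegral

lemma mul_exp_neg_half_le (t : ℝ) : t * rexp (-(1/2) * t) ≤ 4 * rexp (-(1/2) * (t / 2)) := by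
  have hsplit : rexp (-(1/2) * t) = rexp (-(1/2) * (t / 2)) * rexp (-(t / 4)) := by
    rw [← Real.exp_add]; ring_nf
  have hlin : t * rexp (-(t / 4)) ≤ 4 := by
    rw [Real.exp_neg, ← div_eq_mul_inv, div_le_iff₀ (Real.exp_pos _)]
    linarith [Real.add_one_le_exp (t / 4)]
  rw [hsplit, mul_left_comm, mul_comm 4]
  exact mul_le_mul_of_nonneg_left hlin (Real.exp_pos _).le

section GaussianKernel
variable {ι : Type*} [Fintype ι] [DecidableEq ι] {A : Matrix ι ι ℝ}

lemma Matrix.PosDef.integrable_exp_neg_half_quadForm (hA : A.PosDef) (m : ι → ℝ) :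
    Integrable fun x => rexp (-(1/2) * ((x - m) ⬝ᵥ A *ᵥ (x - m))) := by
  have hcentered : Integrable fun x => rexp (-(1/2) * (x ⬝ᵥ A *ᵥ x)) := by
    simp_rw [hA.posSemidef.dotProduct_mulVec_eq_sqrt]
    exact (integrable_comp_mulVec_iff hA.det_sqrt_ne_zero).2
      integrable_exp_neg_half_dotProduct_self
  exact hcentered.comp_sub_right m

lemma Matrix.PosDef.integral_exp_neg_half_quadForm (hA : A.PosDef) (m : ι → ℝ) :
    ∫ x, rexp (-(1/2) * ((x - m) ⬝ᵥ A *ᵥ (x - m))) =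
      (2 * π) ^ (Fintype.card ι / 2 : ℝ) * A.det ^ (-(1:ℝ)/2) := by
  rw [integral_sub_right_eq_self (fun x => rexp (-(1/2) * (x ⬝ᵥ A *ᵥ x))) m]
  simp_rw [hA.posSemidef.dotProduct_mulVec_eq_sqrt]
  rw [integral_comp_mulVec hA.det_sqrt_ne_zero (fun y => rexp (-(1/2) * (y ⬝ᵥ y))),
    integral_exp_neg_half_dotProduct_self, hA.posSemidef.det_sqrt, RCLike.sqrt_real,
    abs_of_nonneg (Real.sqrt_nonneg _), Real.sqrt_eq_rpow, ← Real.rpow_neg hA.det_pos.le,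
    mul_comm, neg_div]

lemma Matrix.PosDef.integrable_quadForm_mul_exp_neg_half_quadForm (hA : A.PosDef) (m : ι → ℝ) :
    Integrable fun x => ((x - m) ⬝ᵥ A *ᵥ (x - m)) * rexp (-(1/2) * ((x - m) ⬝ᵥ A *ᵥ (x - m))) := by
  have hdom :=
    ((hA.smul (show (0:ℝ) < 1/2 by norm_num)).integrable_exp_neg_half_quadForm m).const_mul 4
  refine hdom.mono' (by fun_prop) (Filter.Eventually.of_forall fun x => ?_)
  have hq : 0 ≤ (x - m) ⬝ᵥ A *ᵥ (x - m) := hA.posSemidef.dotProduct_mulVec_nonneg _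
  rw [Real.norm_of_nonneg (by positivity), smul_mulVec, dotProduct_smul, smul_eq_mul,
    mul_comm (1/2 : ℝ), mul_one_div]
  exact mul_exp_neg_half_le _

lemma Matrix.PosDef.exists_quadForm_le (hA : A.PosDef) (M : Matrix ι ι ℝ) (m m' : ι → ℝ) :
    ∃ C, 0 ≤ C ∧ ∀ x, (x - m') ⬝ᵥ M *ᵥ (x - m') ≤ C * (1 + (x - m) ⬝ᵥ A *ᵥ (x - m)) := by
  obtain ⟨c, hc, hle⟩ := hA.exists_dotProduct_self_le
  set K := ∑ i, ∑ j, |M i j|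
  set d := m - m'
  have hK : 0 ≤ K := by positivity
  have hd : 0 ≤ d ⬝ᵥ d := by simpa using dotProduct_star_self_nonneg d
  refine ⟨2 * K * (c + d ⬝ᵥ d), by positivity, fun x => ?_⟩
  have hq : 0 ≤ (x - m) ⬝ᵥ A *ᵥ (x - m) := hA.posSemidef.dotProduct_mulVec_nonneg _
  have hx : x - m' = (x - m) + d := by simp [d]
  have h1 : _ ≤ K * _ := le_of_abs_le (abs_dotProduct_mulVec_self_le M (x - m'))
  have h2 := add_dotProduct_add_self_le (x - m) d
  have h3 := hle (x - m)
  rw [hx] at h1 ⊢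
  calc _ ≤ K * (2 * ((x - m) ⬝ᵥ (x - m) + d ⬝ᵥ d)) := h1.trans (by gcongr)
    _ ≤ _ := by nlinarith [mul_nonneg hc hq, mul_nonneg hd hq]

end GaussianKernel

section Gibbs
variable {α : Type*} [MeasurableSpace α] {μ : Measure α}

lemma setIntegral_withDensity_ofReal {f : α → ℝ} (hf : Measurable f) (hf0 : ∀ x, 0 ≤ f x)
    (h : α → ℝ) {s : Set α} (hs : MeasurableSet s) :
    ∫ x in s, h x ∂μ.withDensity (fun x => ENNReal.ofReal (f x)) = ∫ x in s, f x * h x ∂μ := by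
  rw [setIntegral_withDensity_eq_setIntegral_toReal_smul hf.ennreal_ofReal
    (Filter.Eventually.of_forall fun _ => ENNReal.ofReal_lt_top) h hs]
  simp only [ENNReal.toReal_ofReal (hf0 _), smul_eq_mul]

lemma integral_withDensity_ofReal {f : α → ℝ} (hf : Measurable f) (hf0 : ∀ x, 0 ≤ f x)
    (h : α → ℝ) :
    ∫ x, h x ∂μ.withDensity (fun x => ENNReal.ofReal (f x)) = ∫ x, f x * h x ∂μ := by
  simpa only [setIntegral_univ] using setIntegral_withDensity_ofReal hf hf0 h MeasurableSet.univ

lemma mul_log_le_mul_log_self_add_sub {a b : ℝ} (ha : 0 < a) (hb : 0 < b) :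
    a * Real.log b ≤ a * Real.log a + (b - a) := by
  calc a * Real.log b = a * Real.log a + a * Real.log (b / a) := by
        rw [Real.log_div hb.ne' ha.ne']; ring
    _ ≤ a * Real.log a + a * (b / a - 1) := by
        gcongr; exact Real.log_le_sub_one_of_pos (div_pos hb ha)
    _ = a * Real.log a + (b - a) := by field_simp

theorem integral_mul_log_le_integral_mul_log_self {f g : α → ℝ} (hf : ∀ x, 0 < f x)
    (hg : ∀ x, 0 < g x) (hfi : Integrable f μ) (hgi : Integrable g μ)
    (hflog : Integrable (fun x => f x * Real.log (f x)) μ)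
    (hglog : Integrable (fun x => f x * Real.log (g x)) μ) (hfg : ∫ x, g x ∂μ ≤ ∫ x, f x ∂μ) :
    ∫ x, f x * Real.log (g x) ∂μ ≤ ∫ x, f x * Real.log (f x) ∂μ := by
  have hsub : Integrable (fun x => g x - f x) μ := hgi.sub hfi
  have hmono : ∫ x, f x * Real.log (g x) ∂μ ≤ ∫ x, f x * Real.log (f x) + (g x - f x) ∂μ :=
    integral_mono hglog (hflog.add hsub) fun x => mul_log_le_mul_log_self_add_sub (hf x) (hg x)
  rw [integral_add hflog hsub, integral_sub hgi hfi] at hmono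
  linarith

end Gibbs

section GaussianDensity
variable {p : ℕ} {S : Matrix (Fin p) (Fin p) ℝ} (m : Fin p → ℝ)

lemma gpdf_eq_mul_exp (x : Fin p → ℝ) :
    gpdf m S x = gpdf m S m * rexp (-(1/2) * ((x - m) ⬝ᵥ S⁻¹ *ᵥ (x - m))) := by
  simp [gpdf]

lemma gpdf_self_pos (hS : S.PosDef) : 0 < gpdf m S m := by
  unfold gpdf
  have := hS.det_pos
  positivity

lemma gpdf_pos (hS : S.PosDef) (x : Fin p → ℝ) : 0 < gpdf m S x := by
  rw [gpdf_eq_mul_exp]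
  exact mul_pos (gpdf_self_pos m hS) (Real.exp_pos _)

lemma gpdf_le_gpdf_self (hS : S.PosDef) (x : Fin p → ℝ) : gpdf m S x ≤ gpdf m S m := by
  rw [gpdf_eq_mul_exp]
  refine mul_le_of_le_one_right (gpdf_self_pos m hS).le (Real.exp_le_one_iff.2 ?_)
  have hq : 0 ≤ (x - m) ⬝ᵥ S⁻¹ *ᵥ (x - m) := hS.inv.posSemidef.dotProduct_mulVec_nonneg _
  linarith

lemma continuous_gpdf : Continuous (gpdf m S) := by
  unfold gpdf
  fun_prop

lemma integrable_gpdf (hS : S.PosDef) : Integrable (gpdf m S) := by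
  rw [funext (gpdf_eq_mul_exp m)]
  exact (hS.inv.integrable_exp_neg_half_quadForm m).const_mul _

lemma integral_gpdf (hS : S.PosDef) : ∫ x, gpdf m S x = 1 := by
  rw [funext (gpdf_eq_mul_exp m), integral_const_mul, hS.inv.integral_exp_neg_half_quadForm m,
    det_nonsing_inv, Ring.inverse_eq_inv, Real.inv_rpow hS.det_pos.le, Fintype.card_fin]
  simp only [gpdf, sub_self, mulVec_zero, dotProduct_zero, mul_zero, Real.exp_zero, mul_one]
  rw [neg_div (2 : ℝ) p, Real.rpow_neg (by positivity)]
  field_simp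
  exact div_self (Real.rpow_pos_of_pos hS.det_pos _).ne'

lemma log_gpdf (hS : S.PosDef) (x : Fin p → ℝ) :
    Real.log (gpdf m S x) = Real.log (gpdf m S m) - (1/2) * ((x - m) ⬝ᵥ S⁻¹ *ᵥ (x - m)) := by
  rw [gpdf_eq_mul_exp m, Real.log_mul (gpdf_self_pos m hS).ne' (Real.exp_pos _).ne', Real.log_exp]
  ring

lemma integrable_gpdf_mul_of_abs_le (hS : S.PosDef) {h : (Fin p → ℝ) → ℝ}
    (hh : AEStronglyMeasurable h) {a b : ℝ}
    (hbound : ∀ x, |h x| ≤ a + b * ((x - m) ⬝ᵥ S⁻¹ *ᵥ (x - m))) :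
    Integrable fun x => gpdf m S x * h x := by
  have hdom := ((integrable_gpdf m hS).const_mul |a|).add
    ((hS.inv.integrable_quadForm_mul_exp_neg_half_quadForm m).const_mul (|b| * gpdf m S m))
  refine hdom.mono' ((continuous_gpdf m).aestronglyMeasurable.mul hh)
    (Filter.Eventually.of_forall fun x => ?_)
  have hq : 0 ≤ (x - m) ⬝ᵥ S⁻¹ *ᵥ (x - m) := hS.inv.posSemidef.dotProduct_mulVec_nonneg _
  have hφ := gpdf_pos m hS x
  rw [norm_mul, Real.norm_of_nonneg hφ.le, Real.norm_eq_abs]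
  calc gpdf m S x * |h x| ≤ gpdf m S x * (|a| + |b| * ((x - m) ⬝ᵥ S⁻¹ *ᵥ (x - m))) := by
        gcongr
        exact (hbound x).trans (by gcongr; exacts [le_abs_self a, le_abs_self b])
    _ = _ := by rw [Pi.add_apply, gpdf_eq_mul_exp m x]; ring

lemma integrable_gpdf_mul_log_gpdf (hS : S.PosDef) :
    Integrable fun x => gpdf m S x * Real.log (gpdf m S x) := by
  refine integrable_gpdf_mul_of_abs_le m hS (a := |Real.log (gpdf m S m)|) (b := 1/2)
    ((continuous_gpdf m).log fun x => (gpdf_pos m hS x).ne').aestronglyMeasurable fun x => ?_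
  have hq : 0 ≤ (x - m) ⬝ᵥ S⁻¹ *ᵥ (x - m) := hS.inv.posSemidef.dotProduct_mulVec_nonneg _
  rw [log_gpdf m hS]
  exact (abs_sub _ _).trans (by rw [abs_of_nonneg (by positivity : (0:ℝ) ≤ 1/2 * _)])

end GaussianDensity

section WeightedMaximum
variable {p k : ℕ} (w : Fin k → ℝ) (m : Fin k → Fin p → ℝ) (S : Fin k → Matrix (Fin p) (Fin p) ℝ)

lemma measurableSet_Zpart (j : Fin k) : MeasurableSet (Zpart w m S j) := by
  have hle : ∀ r s, Measurable fun x => w r * gpdf (m r) (S r) x ≤ w s * gpdf (m s) (S s) x :=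
    fun r s => measurableSet_setOfPred.1 <| measurableSet_le
      ((continuous_gpdf (m r)).const_mul (w r)).measurable
      ((continuous_gpdf (m s)).const_mul (w s)).measurable
  exact measurableSet_setOfPred.2 <| (Measurable.forall fun r => hle r j).and <|
    Measurable.forall fun r => measurable_const.imp (Measurable.forall fun s => hle s r).not

open Function in
lemma pairwise_disjoint_Zpart : Pairwise (Disjoint on (Zpart w m S)) := by
  refine fun i j hij => Set.disjoint_left.2 fun x hi hj => ?_
  rcases hij.lt_or_gt with h | h
  exacts [hj.2 i h hi.1, hi.2 j h hj.1]

lemma iUnion_Zpart [Nonempty (Fin k)] : ⋃ j, Zpart w m S j = Set.univ := by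
  refine Set.eq_univ_of_forall fun x => Set.mem_iUnion.2 ?_
  obtain ⟨j₀, -, hj₀⟩ := Finset.exists_max_image Finset.univ
    (fun r => w r * gpdf (m r) (S r) x) Finset.univ_nonempty
  set T := Finset.univ.filter fun r => ∀ s, w s * gpdf (m s) (S s) x ≤ w r * gpdf (m r) (S r) x
  have hT : T.Nonempty := ⟨j₀, by simpa [T] using fun s => hj₀ s (Finset.mem_univ s)⟩
  refine ⟨T.min' hT, (Finset.mem_filter.1 (T.min'_mem hT)).2, fun r hr hmax => ?_⟩
  exact (T.min'_le r (by simpa [T] using hmax)).not_gt hr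

lemma integral_eq_sum_setIntegral_Zpart [Nonempty (Fin k)] {μ : Measure (Fin p → ℝ)}
    {h : (Fin p → ℝ) → ℝ} (hh : Integrable h μ) :
    ∫ x, h x ∂μ = ∑ j, ∫ x in Zpart w m S j, h x ∂μ := by
  rw [← integral_iUnion_fintype (measurableSet_Zpart w m S) (pairwise_disjoint_Zpart w m S)
    fun j => hh.integrableOn, iUnion_Zpart, setIntegral_univ]

variable [Nonempty (Fin k)]

noncomputable def maxWeightedDensity (x : Fin p → ℝ) : ℝ :=
  Finset.univ.sup' Finset.univ_nonempty fun j => w j * gpdf (m j) (S j) x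

lemma le_maxWeightedDensity (j : Fin k) (x : Fin p → ℝ) :
    w j * gpdf (m j) (S j) x ≤ maxWeightedDensity w m S x :=
  Finset.le_sup' (fun j => w j * gpdf (m j) (S j) x) (Finset.mem_univ j)

lemma maxWeightedDensity_eq_of_mem_Zpart {j : Fin k} {x : Fin p → ℝ} (hx : x ∈ Zpart w m S j) :
    maxWeightedDensity w m S x = w j * gpdf (m j) (S j) x :=
  (Finset.sup'_le _ _ fun r _ => hx.1 r).antisymm (le_maxWeightedDensity w m S j x)

lemma continuous_maxWeightedDensity : Continuous (maxWeightedDensity w m S) :=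
  Continuous.finset_sup'_apply _ fun j _ => (continuous_gpdf (m j)).const_mul (w j)

variable {w S}

lemma maxWeightedDensity_pos {s : Fin k} (hs : 0 < w s) (hS : ∀ j, (S j).PosDef)
    (x : Fin p → ℝ) : 0 < maxWeightedDensity w m S x :=
  (mul_pos hs (gpdf_pos (m s) (hS s) x)).trans_le (le_maxWeightedDensity w m S s x)

lemma maxWeightedDensity_le_sum (hw : ∀ j, 0 ≤ w j) (hS : ∀ j, (S j).PosDef) (x : Fin p → ℝ) :
    maxWeightedDensity w m S x ≤ ∑ j, w j * gpdf (m j) (S j) x :=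
  Finset.sup'_le _ _ fun j _ => Finset.single_le_sum
    (fun r _ => mul_nonneg (hw r) (gpdf_pos (m r) (hS r) x).le) (Finset.mem_univ j)

lemma integrable_maxWeightedDensity (hw : ∀ j, 0 ≤ w j) (hS : ∀ j, (S j).PosDef) :
    Integrable (maxWeightedDensity w m S) := by
  obtain ⟨s⟩ := ‹Nonempty (Fin k)›
  have hsum : Integrable fun x => ∑ j, w j * gpdf (m j) (S j) x :=
    integrable_finsetSum _ fun j _ => (integrable_gpdf (m j) (hS j)).const_mul (w j)
  refine hsum.mono' (continuous_maxWeightedDensity w m S).aestronglyMeasurable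
    (Filter.Eventually.of_forall fun x => ?_)
  rw [Real.norm_of_nonneg ((mul_nonneg (hw s) (gpdf_pos (m s) (hS s) x).le).trans
    (le_maxWeightedDensity w m S s x))]
  exact maxWeightedDensity_le_sum m hw hS x

lemma integral_maxWeightedDensity_le (hw : ∀ j, 0 ≤ w j) (hS : ∀ j, (S j).PosDef) :
    ∫ x, maxWeightedDensity w m S x ≤ ∑ j, w j := by
  rw [integral_eq_sum_setIntegral_Zpart w m S (integrable_maxWeightedDensity m hw hS)]
  gcongr with j
  calc ∫ x in Zpart w m S j, maxWeightedDensity w m S x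
      = ∫ x in Zpart w m S j, w j * gpdf (m j) (S j) x :=
        setIntegral_congr_fun (measurableSet_Zpart w m S j)
          fun x hx => maxWeightedDensity_eq_of_mem_Zpart w m S hx
    _ ≤ ∫ x, w j * gpdf (m j) (S j) x :=
        setIntegral_le_integral ((integrable_gpdf (m j) (hS j)).const_mul (w j))
          (Filter.Eventually.of_forall fun x => mul_nonneg (hw j) (gpdf_pos (m j) (hS j) x).le)
    _ = w j := by rw [integral_const_mul, integral_gpdf (m j) (hS j), mul_one]

lemma sum_setIntegral_mul_log_Zpart {μ : Measure (Fin p → ℝ)} (f : (Fin p → ℝ) → ℝ)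
    (hint : Integrable (fun x => f x * Real.log (maxWeightedDensity w m S x)) μ) :
    ∑ j, ∫ x in Zpart w m S j, f x * Real.log (w j * gpdf (m j) (S j) x) ∂μ =
      ∫ x, f x * Real.log (maxWeightedDensity w m S x) ∂μ := by
  rw [integral_eq_sum_setIntegral_Zpart w m S hint]
  refine Finset.sum_congr rfl fun j _ => setIntegral_congr_fun (measurableSet_Zpart w m S j)
    fun x hx => ?_
  simp only [maxWeightedDensity_eq_of_mem_Zpart w m S hx]

lemma abs_log_maxWeightedDensity_le {S₀ : Matrix (Fin p) (Fin p) ℝ}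
    (hS₀ : S₀.PosDef) (m₀ : Fin p → ℝ) {s : Fin k} (hs : 0 < w s) (hw : ∀ j, 0 ≤ w j)
    (hS : ∀ j, (S j).PosDef) :
    ∃ a b, ∀ x, |Real.log (maxWeightedDensity w m S x)| ≤
      a + b * ((x - m₀) ⬝ᵥ S₀⁻¹ *ᵥ (x - m₀)) := by
  obtain ⟨K, hK, hle⟩ := hS₀.inv.exists_quadForm_le (S s)⁻¹ m₀ (m s)
  set C := ∑ j, w j * gpdf (m j) (S j) (m j)
  set c := w s * gpdf (m s) (S s) (m s)
  refine ⟨|Real.log C| + |Real.log c| + K / 2, K / 2, fun x => abs_le.2 ⟨?_, ?_⟩⟩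
  · have hlower := Real.log_le_log (mul_pos hs (gpdf_pos (m s) (hS s) x))
      (le_maxWeightedDensity w m S s x)
    rw [Real.log_mul hs.ne' (gpdf_pos (m s) (hS s) x).ne', log_gpdf (m s) (hS s)] at hlower
    have hc : Real.log c = Real.log (w s) + Real.log (gpdf (m s) (S s) (m s)) :=
      Real.log_mul hs.ne' (gpdf_self_pos (m s) (hS s)).ne'
    linarith [hle x, neg_abs_le (Real.log c), abs_nonneg (Real.log C)]
  · have hupper := Real.log_le_log (maxWeightedDensity_pos m hs hS x)
      ((maxWeightedDensity_le_sum m hw hS x).trans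
        (Finset.sum_le_sum fun j _ => mul_le_mul_of_nonneg_left
          (gpdf_le_gpdf_self (m j) (hS j) x) (hw j)))
    have hq : 0 ≤ (x - m₀) ⬝ᵥ S₀⁻¹ *ᵥ (x - m₀) := hS₀.inv.posSemidef.dotProduct_mulVec_nonneg _
    linarith [le_abs_self (Real.log C), abs_nonneg (Real.log c), mul_nonneg hK hq]

lemma integrable_gpdf_mul_log_maxWeightedDensity {S₀ : Matrix (Fin p) (Fin p) ℝ}
    (hS₀ : S₀.PosDef) (m₀ : Fin p → ℝ) {s : Fin k} (hs : 0 < w s) (hw : ∀ j, 0 ≤ w j)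
    (hS : ∀ j, (S j).PosDef) :
    Integrable fun x => gpdf m₀ S₀ x * Real.log (maxWeightedDensity w m S x) := by
  obtain ⟨a, b, hab⟩ := abs_log_maxWeightedDensity_le m hS₀ m₀ hs hw hS
  exact integrable_gpdf_mul_of_abs_le m₀ hS₀ ((continuous_maxWeightedDensity w m S).log
    fun x => (maxWeightedDensity_pos m hs hS x).ne').aestronglyMeasurable hab

end WeightedMaximum

/-- **Corollary (single Gaussian case).** If `P₀` is a nondegenerate `p`-variate normal with
mean `μ₀` and covariance `Σ₀`, then for any `k`, any Gaussian parameters and weights,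
`E_{P₀}[log φ(X;μ₀,Σ₀)] ≥ E_{P₀}[∑ⱼ 1_{Z_j(θ,π)}(X) log(πⱼ φ(X;θⱼ))]`, so that in the
untrimmed case the population classification likelihood does not increase with `k`. -/
theorem single_gaussian_no_gain {p k : ℕ}
    (m₀ : Fin p → ℝ) (S₀ : Matrix (Fin p) (Fin p) ℝ) (hS₀ : S₀.PosDef)
    (P₀ : Measure (Fin p → ℝ))
    (hP₀ : P₀ = volume.withDensity (fun x => ENNReal.ofReal (gpdf m₀ S₀ x)))
    (w : Fin k → ℝ) (m : Fin k → Fin p → ℝ) (S : Fin k → Matrix (Fin p) (Fin p) ℝ)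
    (hw : ∀ j, 0 ≤ w j) (hw1 : (∑ j, w j) = 1) (hS : ∀ j, (S j).PosDef) :
    (∫ x, Real.log (gpdf m₀ S₀ x) ∂P₀) ≥
      ∑ j, ∫ x in Zpart w m S j, Real.log (w j * gpdf (m j) (S j) x) ∂P₀ := by
  subst hP₀
  obtain ⟨s, -, hs⟩ := Finset.exists_lt_of_sum_lt (by simp [hw1] : ∑ _ : Fin k, (0 : ℝ) < ∑ j, w j)
  have : Nonempty (Fin k) := ⟨s⟩
  have hφ₀ := (continuous_gpdf m₀ (S := S₀)).measurable
  have hφ₀0 : ∀ x, 0 ≤ gpdf m₀ S₀ x := fun x => (gpdf_pos m₀ hS₀ x).le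
  have hglog := integrable_gpdf_mul_log_maxWeightedDensity m hS₀ m₀ hs hw hS
  rw [ge_iff_le, integral_withDensity_ofReal hφ₀ hφ₀0]
  simp only [setIntegral_withDensity_ofReal hφ₀ hφ₀0 _ (measurableSet_Zpart w m S _)]
  rw [sum_setIntegral_mul_log_Zpart m _ hglog]
  refine integral_mul_log_le_integral_mul_log_self (gpdf_pos m₀ hS₀)
    (maxWeightedDensity_pos m hs hS) (integrable_gpdf m₀ hS₀)
    (integrable_maxWeightedDensity m hw hS) (integrable_gpdf_mul_log_gpdf m₀ hS₀) hglog ?_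
  rw [integral_gpdf m₀ hS₀, ← hw1]
  exact integral_maxWeightedDensity_le m hw hS
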